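/- Let w123, w321, w12 be nonnegative real numbers. Let L₃ be the 3×3 complex matrix [[w123 + w321 + w12, −w321 − w12, −w123], [−w123 − w12, w123 + w321 + w12, −w321], [−w321, −w123, w123 + w321]], and with d₂ = w123 + w321 + w12 let L₆ be the 6×6 complex matrix with rows [d₂, −w321, −w123, −w12, 0, 0], [−w123, d₂, −w321, 0, 0, −w12], [−w321, −w123, d₂, 0, −w12, 0], [−w12, 0, 0, d₂, −w321, −w123], [0, 0, −w12, −w123, d₂, −w321], [0, −w12, 0, −w321, −w123, d₂]. Then every complex eigenvalue of L₃ is also an eigenvalue of L₆ (the spectrum of L₃ is contained in the spectrum of L₆). -/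

import Mathlib

/-!
Collapsing the six vertices along `p = ![0, 1, 2, 1, 2, 0] : Fin 6 → Fin 3` is an equitable
partition of the induced graph whose quotient matrix is `L₃`: with `S` the 0/1 matrix of `p`,
`L₆ * S = S * L₃`. As `p` is surjective, `S` is injective, so it carries every eigenvector of
`L₃` to an eigenvector of `L₆` with the same eigenvalue.
-/

open Matrix

namespace Matrix

variable {m n K : Type*} [Fintype m] [Fintype n] [DecidableEq m] [DecidableEq n] [Field K]

theorem spectrum_subset_of_mul_eq_mul {A : Matrix m m K} {B : Matrix n n K} {S : Matrix m n K}
    (hS : Function.Injective S.mulVec) (h : A * S = S * B) : spectrum K B ⊆ spectrum K A := by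
  intro μ hμ
  have hshift : (algebraMap K _ μ - A) * S = S * (algebraMap K _ μ - B) := by
    simp only [Algebra.algebraMap_eq_smul_one, Matrix.sub_mul, Matrix.mul_sub, h, smul_mul,
      Matrix.mul_smul, Matrix.one_mul, Matrix.mul_one]
  rw [spectrum.mem_iff, isUnit_iff_isUnit_det, isUnit_iff_ne_zero, not_not,
    ← exists_mulVec_eq_zero_iff] at hμ ⊢
  obtain ⟨v, hv, hBv⟩ := hμ
  refine ⟨S *ᵥ v, fun hSv => hv (hS (by rw [hSv, mulVec_zero])), ?_⟩
  rw [mulVec_mulVec, hshift, ← mulVec_mulVec, hBv, mulVec_zero]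

theorem spectrum_subset_of_mul_submatrix_one {A : Matrix m m K} {B : Matrix n n K} {p : m → n}
    (hp : Function.Surjective p) (h : A * (1 : Matrix n n K).submatrix p id = B.submatrix p id) :
    spectrum K B ⊆ spectrum K A := by
  have hpullback (v : n → K) : (1 : Matrix n n K).submatrix p (Equiv.refl n) *ᵥ v = v ∘ p := by
    rw [submatrix_mulVec_equiv, one_mulVec]; rfl
  refine spectrum_subset_of_mul_eq_mul (S := (1 : Matrix n n K).submatrix p (Equiv.refl n))
    (fun v w hvw => hp.injective_comp_right ?_) ?_
  · rwa [hpullback, hpullback] at hvw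
  · rw [one_submatrix_mul]
    exact h

end Matrix

theorem spectrum_inclusion_G2_3_general (w123 w321 w12 : ℝ) :
    spectrum ℂ
      (!![(w123 + w321 + w12 : ℂ), -w321 - w12, -w123;
          -w123 - w12, w123 + w321 + w12, -w321;
          -w321, -w123, w123 + w321] : Matrix (Fin 3) (Fin 3) ℂ) ⊆
    spectrum ℂ
      (!![(w123 + w321 + w12 : ℂ), -w321, -w123, -w12, 0, 0;
          -w123, w123 + w321 + w12, -w321, 0, 0, -w12;
          -w321, -w123, w123 + w321 + w12, 0, -w12, 0;
          -w12, 0, 0, w123 + w321 + w12, -w321, -w123;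
          0, 0, -w12, -w123, w123 + w321 + w12, -w321;
          0, -w12, 0, -w321, -w123, w123 + w321 + w12] : Matrix (Fin 6) (Fin 6) ℂ) := by
  refine spectrum_subset_of_mul_submatrix_one (p := ![0, 1, 2, 1, 2, 0]) (by decide) ?_
  ext i j
  fin_cases i <;> fin_cases j <;>
    simp only [mul_apply, submatrix_apply, one_apply, Fin.sum_univ_six] <;> simp <;> ring

/-- Intertwining relation for `G₂(3)`: every complex eigenvalue of the Laplacian `L₃` of the
underlying graph (cycle weights `w123`, `w321` and transposition weight `w12`, all
nonnegative) is also an eigenvalue of the Laplacian `L₆` of the six-vertex induced graph. -/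
theorem spectrum_inclusion_G2_3 (w123 w321 w12 : ℝ)
    (h123 : 0 ≤ w123) (h321 : 0 ≤ w321) (h12 : 0 ≤ w12) :
    spectrum ℂ
      (!![(w123 + w321 + w12 : ℂ), -w321 - w12, -w123;
          -w123 - w12, w123 + w321 + w12, -w321;
          -w321, -w123, w123 + w321] : Matrix (Fin 3) (Fin 3) ℂ) ⊆
    spectrum ℂ
      (!![(w123 + w321 + w12 : ℂ), -w321, -w123, -w12, 0, 0;
          -w123, w123 + w321 + w12, -w321, 0, 0, -w12;
          -w321, -w123, w123 + w321 + w12, 0, -w12, 0;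
          -w12, 0, 0, w123 + w321 + w12, -w321, -w123;
          0, 0, -w12, -w123, w123 + w321 + w12, -w321;
          0, -w12, 0, -w321, -w123, w123 + w321 + w12] : Matrix (Fin 6) (Fin 6) ℂ) :=
  spectrum_inclusion_G2_3_general w123 w321 w12
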